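/- arXiv:1811.02873 — 8 statements merged into one kernel-verified Lean document; each statement's English description precedes it below -/
import Mathlib

section
/- Let D ⊆ ℂ be a convex open set, f : D → ℂ analytic, and suppose there exists θ ∈ ℝ such that Im(e^{iθ} f'(z)) > 0 for all z ∈ D. Then f is injective on D. -/
/-!
Along the segment `t ↦ z₀ + t (z₁ - z₀)` the real function `t ↦ Im (f(z₀ + t (z₁ - z₀)) / (z₁ - z₀))`
has derivative `Im f'(z₀ + t (z₁ - z₀)) > 0`, so by the mean value theorem it is strictly increasing
and `f z₀ ≠ f z₁`. The rotation by `e^{iθ}` reduces the theorem to the case `θ = 0`.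
-/

open Complex Set

theorem Convex.injOn_of_hasDerivAt_of_im_pos {D : Set ℂ} (hD : Convex ℝ D) {f f' : ℂ → ℂ}
    (hf : ∀ z ∈ D, HasDerivAt f (f' z) z) (hf' : ∀ z ∈ D, 0 < (f' z).im) : InjOn f D := by
  intro z₀ hz₀ z₁ hz₁ hfz
  by_contra hne
  set d := z₁ - z₀
  have hd : d ≠ 0 := sub_ne_zero.2 (Ne.symm hne)
  have hseg : ∀ t ∈ Icc (0 : ℝ) 1, z₀ + t • d ∈ D := fun t ht => hD.add_smul_sub_mem hz₀ hz₁ ht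
  let φ : ℝ → ℝ := fun t => (f (z₀ + t • d) / d).im
  have hφ : ∀ t ∈ Icc (0 : ℝ) 1, HasDerivAt φ (f' (z₀ + t • d)).im t := by
    intro t ht
    have hline : HasDerivAt (fun s : ℝ => z₀ + s • d) d t := by
      simpa using ((hasDerivAt_id t).smul_const d).const_add z₀
    have hquot := ((hf _ (hseg t ht)).scomp t hline).div_const d
    rw [smul_eq_mul, mul_div_cancel_left₀ _ hd] at hquot
    exact imCLM.hasFDerivAt.comp_hasDerivAt t hquot
  have hmono : StrictMonoOn φ (Icc 0 1) :=
    strictMonoOn_of_hasDerivWithinAt_pos (convex_Icc 0 1)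
      (fun t ht => (hφ t ht).continuousAt.continuousWithinAt)
      (fun t ht => (hφ t (interior_subset ht)).hasDerivWithinAt)
      (fun t ht => hf' _ (hseg t (interior_subset ht)))
  have hlt : φ 0 < φ 1 :=
    hmono (left_mem_Icc.2 zero_le_one) (right_mem_Icc.2 zero_le_one) zero_lt_one
  simp [φ, d, hfz] at hlt

theorem noshiro_warschawski_general (D : Set ℂ) (hDconv : Convex ℝ D)
    (f f' : ℂ → ℂ) (hf : ∀ z ∈ D, HasDerivAt f (f' z) z) (θ : ℝ)
    (hθ : ∀ z ∈ D, 0 < (Complex.exp ((θ : ℂ) * Complex.I) * f' z).im) :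
    Set.InjOn f D := by
  have hrot : InjOn (fun z => exp (θ * I) * f z) D :=
    hDconv.injOn_of_hasDerivAt_of_im_pos (fun z hz => (hf z hz).const_mul _) hθ
  exact InjOn.of_comp (g := (exp (θ * I) * ·)) hrot

/-- Noshiro–Warschawski univalence criterion: if `f` is analytic on a convex open
set `D` and `Im (e^{iθ} f'(z)) > 0` on `D` for some real `θ`, then `f` is injective on `D`. -/
theorem noshiro_warschawski (D : Set ℂ) (hDconv : Convex ℝ D) (hDopen : IsOpen D)
    (f f' : ℂ → ℂ) (hf : ∀ z ∈ D, HasDerivAt f (f' z) z) (θ : ℝ)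
    (hθ : ∀ z ∈ D, 0 < (Complex.exp ((θ : ℂ) * Complex.I) * f' z).im) :
    Set.InjOn f D :=
  noshiro_warschawski_general D hDconv f f' hf θ hθ
end

section
/- Let μ be a Borel probability measure on ℝ with a finite first moment m = ∫ x dμ(x), and let F_μ(z) = 1/G_μ(z) where G_μ(z) = ∫ 1/(z−x) dμ(x) for z ∈ ℂ⁺. Then m = lim_{y→∞} (iy − F_μ(iy)). -/
/-!
With `z = iy`, the identity `z - 1/G_μ(z) = (∫ x · z/(z - x) dμ) / (∫ z/(z - x) dμ)` reduces the
claim to two limits. Since `‖iy / (iy - x)‖ ≤ 1` and `iy / (iy - x) → 1` pointwise, dominated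
convergence (with dominating function `|x|`, resp. `1`) sends the numerator to `m` and the
denominator to `1`.
-/

open MeasureTheory Complex Filter Topology

lemma ofReal_mul_I_sub_ne_zero {y : ℝ} (hy : y ≠ 0) (x : ℝ) : (y : ℂ) * I - x ≠ 0 := by
  intro h
  exact hy (by simpa using congrArg im h)

lemma norm_ofReal_mul_I_div_le_one (x y : ℝ) : ‖(y : ℂ) * I / ((y : ℂ) * I - x)‖ ≤ 1 := by
  rw [norm_div]
  exact div_le_one_of_le₀ (by simpa using abs_im_le_norm ((y : ℂ) * I - x)) (norm_nonneg _)

lemma ofReal_mul_I_div_eq_inv {y : ℝ} (hy : y ≠ 0) (x : ℝ) :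
    (y : ℂ) * I / ((y : ℂ) * I - x) = (1 + ((x / y : ℝ) : ℂ) * I)⁻¹ := by
  have hy' : (y : ℂ) ≠ 0 := by exact_mod_cast hy
  rw [← inv_div]
  congr 1
  push_cast
  field_simp
  linear_combination (-(x : ℂ)) * I_sq

lemma tendsto_ofReal_mul_I_div (x : ℝ) :
    Tendsto (fun y : ℝ => (y : ℂ) * I / ((y : ℂ) * I - x)) atTop (𝓝 1) := by
  have hxy : Tendsto (fun y : ℝ => x / y) atTop (𝓝 0) := tendsto_const_nhds.div_atTop tendsto_id
  have hcont : ContinuousAt (fun t : ℝ => (1 + (t : ℂ) * I)⁻¹) 0 :=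
    ContinuousAt.inv₀ (by fun_prop) (by simp)
  have hlim := hcont.tendsto.comp hxy
  simp only [ofReal_zero, zero_mul, add_zero, inv_one] at hlim
  refine hlim.congr' ?_
  filter_upwards [eventually_ne_atTop 0] with y hy
  exact (ofReal_mul_I_div_eq_inv hy x).symm

lemma integrable_ofReal_mul_I_div (μ : Measure ℝ) [IsFiniteMeasure μ] (y : ℝ) :
    Integrable (fun x : ℝ => (y : ℂ) * I / ((y : ℂ) * I - x)) μ :=
  (integrable_const (1 : ℝ)).mono' (by fun_prop : Measurable _).aestronglyMeasurable
    (ae_of_all _ fun x => norm_ofReal_mul_I_div_le_one x y)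

lemma tendsto_integral_mul_ofReal_mul_I_div {μ : Measure ℝ} {f : ℝ → ℂ} (hf : Integrable f μ) :
    Tendsto (fun y : ℝ => ∫ x, f x * ((y : ℂ) * I / ((y : ℂ) * I - x)) ∂μ) atTop
      (𝓝 (∫ x, f x ∂μ)) := by
  refine tendsto_integral_filter_of_dominated_convergence (‖f ·‖)
    (Eventually.of_forall fun y => hf.aestronglyMeasurable.mul
      (by fun_prop : Measurable _).aestronglyMeasurable)
    (Eventually.of_forall fun y => ae_of_all _ fun x => ?_) hf.norm
    (ae_of_all _ fun x => by simpa using (tendsto_ofReal_mul_I_div x).const_mul (f x))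
  rw [norm_mul]
  exact mul_le_of_le_one_right (norm_nonneg _) (norm_ofReal_mul_I_div_le_one x y)

lemma ofReal_mul_I_sub_inv_integral_eq_div (μ : Measure ℝ) [IsProbabilityMeasure μ] {y : ℝ}
    (hy : y ≠ 0) (hD : ∫ x, (y : ℂ) * I / ((y : ℂ) * I - x) ∂μ ≠ 0) :
    (y : ℂ) * I - (∫ x, ((y : ℂ) * I - x)⁻¹ ∂μ)⁻¹ =
      (∫ x, (x : ℂ) * ((y : ℂ) * I / ((y : ℂ) * I - x)) ∂μ) /
        ∫ x, (y : ℂ) * I / ((y : ℂ) * I - x) ∂μ := by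
  set D := ∫ x, (y : ℂ) * I / ((y : ℂ) * I - x) ∂μ
  set G := ∫ x, ((y : ℂ) * I - x)⁻¹ ∂μ
  have hD_eq : D = (y : ℂ) * I * G := by
    simp only [D, div_eq_mul_inv]
    exact integral_const_mul _ _
  have hN_eq : ∫ x, (x : ℂ) * ((y : ℂ) * I / ((y : ℂ) * I - x)) ∂μ = (y : ℂ) * I * (D - 1) := by
    have hpt (x : ℝ) : (x : ℂ) * ((y : ℂ) * I / ((y : ℂ) * I - x)) =
        (y : ℂ) * I * ((y : ℂ) * I / ((y : ℂ) * I - x)) - (y : ℂ) * I := by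
      have := ofReal_mul_I_sub_ne_zero hy x
      field_simp
      ring
    simp only [hpt]
    rw [integral_sub ((integrable_ofReal_mul_I_div μ y).const_mul _) (integrable_const _),
      integral_const_mul]
    simp [D, mul_sub]
  have hy' : (y : ℂ) ≠ 0 := by exact_mod_cast hy
  have hG : G ≠ 0 := by rintro hG; simp [hD_eq, hG] at hD
  rw [hN_eq, hD_eq]
  field_simp

/-- If a probability measure `μ` on `ℝ` has a finite first moment `m = ∫ x dμ(x)`,
then `m = lim_{y → ∞} (iy - F_μ(iy))`, where `F_μ = 1/G_μ` is the reciprocal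
Cauchy transform. -/
theorem first_moment_limit (μ : Measure ℝ) [IsProbabilityMeasure μ]
    (hint : Integrable (fun x : ℝ => x) μ) :
    Tendsto (fun y : ℝ =>
        (y : ℂ) * Complex.I - (∫ x : ℝ, ((y : ℂ) * Complex.I - (x : ℂ))⁻¹ ∂μ)⁻¹)
      atTop (nhds ((∫ x : ℝ, x ∂μ : ℝ) : ℂ)) := by
  have hD := tendsto_integral_mul_ofReal_mul_I_div (integrable_const (1 : ℂ) (μ := μ))
  have hN := tendsto_integral_mul_ofReal_mul_I_div hint.ofReal
  simp only [one_mul, integral_const, probReal_univ, one_smul] at hD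
  rw [integral_ofReal] at hN
  have hlim := hN.div hD one_ne_zero
  rw [div_one] at hlim
  refine hlim.congr' ?_
  filter_upwards [eventually_ne_atTop 0, hD.eventually_ne one_ne_zero] with y hy hD0
  exact (ofReal_mul_I_sub_inv_integral_eq_div μ hy hD0).symm
end

section
/- The complex linear span of the functions x ↦ 1/(z − x) for z ∈ ℂ∖ℝ is dense (in the uniform norm) in C₀(ℝ), the space of continuous functions f : ℝ → ℂ with f(x) → 0 as x → ±∞. -/
/-!
Extend functions by `0` to the one-point compactification `ℝ ∪ {∞}`, so that `C₀(ℝ, ℂ)` becomes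
the functions vanishing at `∞`, and write `g_z x = (z - x)⁻¹`. The closure of the span of the
`g_z` is closed under conjugation (`conj ∘ g_z = g_{conj z}`) and under products: by the resolvent
identity `g_z g_w = (g_z - g_w) / (w - z)` for `w ≠ z`, and `g_z ^ 2` is the uniform limit of
`g_z g_{z + t}` as `t → 0`. So it is a closed non-unital star subalgebra, and `g_i` separates the
points of `ℝ ∪ {∞}`. By Stone–Weierstrass its unitization is dense, and intersecting with the
kernel of evaluation at `∞` shows that it contains every function vanishing at `∞`.
-/

open Complex ComplexConjugate Filter Topology OnePoint

open scoped ZeroAtInfty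

section StoneWeierstrass

variable {𝕜 X : Type*} [RCLike 𝕜] [TopologicalSpace X] [CompactSpace X]

theorem NonUnitalStarSubalgebra.mem_of_apply_eq_zero (N : NonUnitalStarSubalgebra 𝕜 C(X, 𝕜))
    (hN : IsClosed (N : Set C(X, 𝕜))) (x₀ : X) (hN₀ : ∀ g ∈ N, g x₀ = 0)
    (hsep : ∀ ⦃x y : X⦄, x ≠ y → ∃ g ∈ N, g x ≠ g y) {f : C(X, 𝕜)} (hf : f x₀ = 0) :
    f ∈ N := by
  set T := StarAlgebra.adjoin 𝕜 (N : Set C(X, 𝕜))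
  have hT : T.topologicalClosure = ⊤ :=
    ContinuousMap.starSubalgebra_topologicalClosure_eq_top_of_separatesPoints T fun x y hxy => by
      obtain ⟨g, hg, hgxy⟩ := hsep hxy
      exact ⟨g, ⟨g, StarAlgebra.subset_adjoin 𝕜 _ hg, rfl⟩, hgxy⟩
  have hker : (T : Set C(X, 𝕜)) ∩ RingHom.ker (ContinuousMap.evalStarAlgHom 𝕜 𝕜 x₀) ⊆ N := by
    rintro g ⟨hgT, hg⟩
    have hgsup : g ∈ Submodule.span 𝕜 {1} ⊔ N.toSubmodule := by
      rwa [← StarAlgebra.adjoin_nonUnitalStarSubalgebra_eq_span]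
    obtain ⟨_, hc, n, hn, rfl⟩ := Submodule.mem_sup.mp hgsup
    obtain ⟨c, rfl⟩ := Submodule.mem_span_singleton.mp hc
    have hc0 : c = 0 := by simpa [hN₀ n hn] using hg
    simpa [hc0] using hn
  have hf' : f ∈ closure (T : Set C(X, 𝕜)) ∩ RingHom.ker (ContinuousMap.evalStarAlgHom 𝕜 𝕜 x₀) :=
    ⟨by rw [← StarSubalgebra.topologicalClosure_coe, hT]; trivial, hf⟩
  -- `T` contains the constants, so `closure (T ∩ ker) = closure T ∩ ker`.
  rw [← ContinuousMap.AlgHom.closure_ker_inter _ (continuous_eval_const x₀)] at hf'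
  exact hN.closure_subset_iff.mpr hker hf'

end StoneWeierstrass

namespace Submodule

theorem mul_mem_topologicalClosure_span {R A : Type*} [CommSemiring R] [Semiring A] [Algebra R A]
    [TopologicalSpace A] [ContinuousMul A] [ContinuousAdd A] [ContinuousConstSMul R A] {s : Set A}
    (hs : ∀ a ∈ s, ∀ b ∈ s, a * b ∈ (span R s).topologicalClosure) {a b : A}
    (ha : a ∈ (span R s).topologicalClosure) (hb : b ∈ (span R s).topologicalClosure) :
    a * b ∈ (span R s).topologicalClosure := by
  have hspan : span R s * span R s ≤ (span R s).topologicalClosure := by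
    rw [span_mul_span, span_le]
    rintro _ ⟨a, ha, b, hb, rfl⟩
    exact hs a ha b hb
  rw [← SetLike.mem_coe, topologicalClosure_coe, ← closure_closure]
  exact map_mem_closure₂ continuous_mul ha hb fun x hx y hy => hspan (mul_mem_mul hx hy)

theorem star_mem_topologicalClosure_span {R A : Type*} [CommSemiring R] [StarRing R]
    [AddCommMonoid A] [Module R A] [StarAddMonoid A] [StarModule R A] [TopologicalSpace A]
    [ContinuousStar A] [ContinuousAdd A] [ContinuousConstSMul R A] {s : Set A}
    (hs : ∀ a ∈ s, star a ∈ s) {a : A} (ha : a ∈ (span R s).topologicalClosure) :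
    star a ∈ (span R s).topologicalClosure := by
  refine map_mem_closure continuous_star ha fun b hb => ?_
  induction hb using span_induction with
  | mem b hb => exact subset_span (hs b hb)
  | zero => simp
  | add b c _ _ hb hc => simpa using add_mem hb hc
  | smul r b _ hb => simpa using smul_mem _ (star r) hb

end Submodule

def ZeroAtInftyContinuousMap.toOnePoint {X E : Type*} [TopologicalSpace X] [R1Space X]
    [TopologicalSpace E] [Zero E] (f : C₀(X, E)) : C(OnePoint X, E) :=
  OnePoint.continuousMapMk f 0 (by rw [coclosedCompact_eq_cocompact]; exact zero_at_infty f)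

namespace Complex

lemma sub_ofReal_ne_zero_of_im_ne_zero {z : ℂ} (hz : z.im ≠ 0) (x : ℝ) : z - x ≠ 0 :=
  fun h => hz (by simpa using congrArg im h)

lemma abs_im_le_norm_sub_ofReal (z : ℂ) (x : ℝ) : |z.im| ≤ ‖z - x‖ := by
  simpa using abs_im_le_norm (z - x)

lemma tendsto_inv_const_sub_ofReal (z : ℂ) :
    Tendsto (fun x : ℝ => (z - x)⁻¹) (coclosedCompact ℝ) (𝓝 0) := by
  rw [coclosedCompact_eq_cocompact, ← Metric.cobounded_eq_cocompact]
  exact tendsto_inv₀_cobounded.comp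
    ((tendsto_const_sub_cobounded z).comp (RCLike.tendsto_ofReal_cobounded_cobounded ℂ))

end Complex

noncomputable def cauchyKernel (z : ℂ) (hz : z.im ≠ 0) : C(OnePoint ℝ, ℂ) :=
  OnePoint.continuousMapMk
    ⟨fun x : ℝ => (z - x)⁻¹, by fun_prop (disch := exact sub_ofReal_ne_zero_of_im_ne_zero hz)⟩ 0
    (tendsto_inv_const_sub_ofReal z)

def cauchyKernels : Set C(OnePoint ℝ, ℂ) := {g | ∃ z hz, cauchyKernel z hz = g}

section CauchyKernel

variable {z w : ℂ} (hz : z.im ≠ 0) (hw : w.im ≠ 0)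

@[simp] lemma cauchyKernel_apply_coe (x : ℝ) : cauchyKernel z hz x = (z - x)⁻¹ := rfl

@[simp] lemma cauchyKernel_apply_infty : cauchyKernel z hz ∞ = 0 := rfl

lemma cauchyKernel_mem_cauchyKernels : cauchyKernel z hz ∈ cauchyKernels := ⟨z, hz, rfl⟩

lemma cauchyKernel_mul_cauchyKernel (hzw : w ≠ z) :
    cauchyKernel z hz * cauchyKernel w hw =
      (w - z)⁻¹ • (cauchyKernel z hz - cauchyKernel w hw) := by
  have hwz : w - z ≠ 0 := sub_ne_zero.mpr hzw
  ext x
  induction x using OnePoint.rec with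
  | infty => simp
  | coe x =>
    have := sub_ofReal_ne_zero_of_im_ne_zero hz x
    have := sub_ofReal_ne_zero_of_im_ne_zero hw x
    simp only [ContinuousMap.mul_apply, ContinuousMap.smul_apply, ContinuousMap.sub_apply,
      cauchyKernel_apply_coe, smul_eq_mul]
    field_simp
    ring

lemma norm_cauchyKernel_sub_cauchyKernel_le :
    ‖cauchyKernel w hw - cauchyKernel z hz‖ ≤ ‖w - z‖ / (|w.im| * |z.im|) := by
  refine (ContinuousMap.norm_le _ (by positivity)).mpr fun x => ?_
  induction x using OnePoint.rec with
  | infty => simpa using div_nonneg (norm_nonneg _) (by positivity)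
  | coe x =>
    have := sub_ofReal_ne_zero_of_im_ne_zero hz x
    have := sub_ofReal_ne_zero_of_im_ne_zero hw x
    have hres : (w - x)⁻¹ - (z - x)⁻¹ = (z - w) / ((w - x) * (z - x)) := by
      field_simp
      ring
    rw [ContinuousMap.sub_apply, cauchyKernel_apply_coe, cauchyKernel_apply_coe, hres, norm_div,
      norm_mul, norm_sub_rev]
    gcongr <;> exact abs_im_le_norm_sub_ofReal _ _

lemma tendsto_cauchyKernel_add_ofReal :
    Tendsto (fun t : ℝ => cauchyKernel (z + t) (by simpa using hz)) (𝓝 0)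
      (𝓝 (cauchyKernel z hz)) := by
  rw [tendsto_iff_norm_sub_tendsto_zero]
  refine squeeze_zero (fun _ => norm_nonneg _)
    (fun t => norm_cauchyKernel_sub_cauchyKernel_le hz _) ?_
  simp only [add_im, ofReal_im, add_zero, add_sub_cancel_left, norm_real]
  exact (continuous_norm.div_const _).tendsto' 0 0 (by simp)

lemma cauchyKernel_injective : Function.Injective (cauchyKernel z hz) := by
  have hne (x : ℝ) : (z - x)⁻¹ ≠ 0 := inv_ne_zero (sub_ofReal_ne_zero_of_im_ne_zero hz x)
  intro x y hxy
  induction x using OnePoint.rec <;> induction y using OnePoint.rec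
  · rfl
  · exact absurd hxy.symm (hne _)
  · exact absurd hxy (hne _)
  · simpa using hxy

lemma cauchyKernel_mul_mem_span (hzw : w ≠ z) :
    cauchyKernel z hz * cauchyKernel w hw ∈ Submodule.span ℂ cauchyKernels := by
  rw [cauchyKernel_mul_cauchyKernel hz hw hzw]
  exact Submodule.smul_mem _ _ (Submodule.sub_mem _
    (Submodule.subset_span (cauchyKernel_mem_cauchyKernels hz))
    (Submodule.subset_span (cauchyKernel_mem_cauchyKernels hw)))

lemma star_cauchyKernel :
    star (cauchyKernel z hz) = cauchyKernel (conj z) (by simpa using hz) := by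
  ext x
  induction x using OnePoint.rec with
  | infty => simp
  | coe x => simp

lemma cauchyKernel_mul_mem_topologicalClosure_span :
    cauchyKernel z hz * cauchyKernel w hw ∈
      (Submodule.span ℂ cauchyKernels).topologicalClosure := by
  obtain rfl | hzw := eq_or_ne z w
  · have hlim : Tendsto (fun t : ℝ => cauchyKernel z hz * cauchyKernel (z + t) (by simpa using hz))
        (𝓝[≠] 0) (𝓝 (cauchyKernel z hz * cauchyKernel z hz)) :=
      tendsto_const_nhds.mul ((tendsto_cauchyKernel_add_ofReal hz).mono_left nhdsWithin_le_nhds)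
    refine mem_closure_of_tendsto hlim (eventually_nhdsWithin_of_forall fun t ht => ?_)
    exact cauchyKernel_mul_mem_span _ _ (by simpa using ht)
  · exact Submodule.le_topologicalClosure _ (cauchyKernel_mul_mem_span hz hw hzw.symm)

end CauchyKernel

noncomputable def cauchyAlgebra : NonUnitalStarSubalgebra ℂ C(OnePoint ℝ, ℂ) :=
  { (Submodule.span ℂ cauchyKernels).topologicalClosure.toNonUnitalSubalgebra
      fun _ _ => Submodule.mul_mem_topologicalClosure_span (by
        rintro _ ⟨z, hz, rfl⟩ _ ⟨w, hw, rfl⟩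
        exact cauchyKernel_mul_mem_topologicalClosure_span hz hw) with
    star_mem' := Submodule.star_mem_topologicalClosure_span (by
      rintro _ ⟨z, hz, rfl⟩
      rw [star_cauchyKernel]
      exact cauchyKernel_mem_cauchyKernels _) }

lemma isClosed_cauchyAlgebra : IsClosed (cauchyAlgebra : Set C(OnePoint ℝ, ℂ)) :=
  (Submodule.span ℂ cauchyKernels).isClosed_topologicalClosure

lemma apply_infty_eq_zero_of_mem_cauchyAlgebra {g : C(OnePoint ℝ, ℂ)} (hg : g ∈ cauchyAlgebra) :
    g ∞ = 0 := by
  have hle : (Submodule.span ℂ cauchyKernels).topologicalClosure ≤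
      (ContinuousMap.evalCLM ℂ ∞ : C(OnePoint ℝ, ℂ) →L[ℂ] ℂ).ker := by
    refine Submodule.topologicalClosure_minimal _ ?_ (ContinuousLinearMap.isClosed_ker _)
    rw [Submodule.span_le]
    rintro _ ⟨z, hz, rfl⟩
    simp
  exact hle hg

lemma exists_eq_sum_of_mem_span_cauchyKernels {g : C(OnePoint ℝ, ℂ)}
    (hg : g ∈ Submodule.span ℂ cauchyKernels) :
    ∃ (n : ℕ) (c : Fin n → ℂ) (z : Fin n → ℂ), (∀ i, (z i).im ≠ 0) ∧
      ∀ x : ℝ, g x = ∑ i, c i * (z i - (x : ℂ))⁻¹ := by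
  obtain ⟨n, c, g, rfl⟩ := Submodule.mem_span_set'.mp hg
  choose z hz hgz using fun i => (g i).2
  refine ⟨n, c, z, hz, fun x => ?_⟩
  simp [← hgz]

/-- The complex linear span of the Cauchy kernels `x ↦ 1/(z - x)`, for `z ∈ ℂ \ ℝ`,
is dense in `C₀(ℝ, ℂ)` with respect to the uniform norm. -/
theorem cauchy_kernels_dense (f : C₀(ℝ, ℂ)) (ε : ℝ) (hε : 0 < ε) :
    ∃ (n : ℕ) (c : Fin n → ℂ) (z : Fin n → ℂ), (∀ i, (z i).im ≠ 0) ∧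
      ∀ x : ℝ, ‖f x - ∑ i, c i * (z i - (x : ℂ))⁻¹‖ < ε := by
  have hsep : ∀ ⦃x y : OnePoint ℝ⦄, x ≠ y → ∃ g ∈ cauchyAlgebra, g x ≠ g y := fun x y hxy =>
    ⟨cauchyKernel I (by simp), Submodule.le_topologicalClosure _ (Submodule.subset_span
      (cauchyKernel_mem_cauchyKernels _)), (cauchyKernel_injective _).ne hxy⟩
  have hf : f.toOnePoint ∈ cauchyAlgebra :=
    cauchyAlgebra.mem_of_apply_eq_zero isClosed_cauchyAlgebra ∞
      (fun _ => apply_infty_eq_zero_of_mem_cauchyAlgebra) hsep rfl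
  obtain ⟨g, hg, hfg⟩ := Metric.mem_closure_iff.mp hf ε hε
  obtain ⟨n, c, z, hz, hgz⟩ := exists_eq_sum_of_mem_span_cauchyKernels hg
  refine ⟨n, c, z, hz, fun x => ?_⟩
  calc ‖f x - ∑ i, c i * (z i - (x : ℂ))⁻¹‖ = ‖(f.toOnePoint - g) x‖ := by
        rw [ContinuousMap.sub_apply, hgz]; rfl
    _ ≤ ‖f.toOnePoint - g‖ := ContinuousMap.norm_coe_le_norm _ _
    _ < ε := by rwa [← dist_eq_norm]
end

section
/- The complex linear span of the constant function 1 together with the functions x ↦ zx/(1 − zx) for z ∈ ℂ with |z| ≠ 1, restricted to the unit circle 𝕋 = {x ∈ ℂ : |x| = 1}, is dense in C(𝕋) with respect to the uniform norm. -/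
/-!
Write `g_z x = (1 - z x)⁻¹`; since `g_0 = 1` and `g_z = 1 + z x / (1 - z x)`, the kernels of the
statement span the same space as the `g_z`. The closure of that span is a star subalgebra of
`C(𝕋, ℂ)`: on the circle `x̄ = x⁻¹`, so `conj g_z = 1 - g_{1/z̄}`; partial fractions give
`g_z g_w = (z g_z - w g_w) / (z - w)` for `z ≠ w`; and `g_z²` is the limit of `g_z g_w` as `w → z`,
because `z ↦ g_z` is continuous into `C(𝕋, ℂ)`. As `g_{1/2}` separates points, Stone–Weierstrass
makes it dense.
-/

open Complex Finset

theorem Submodule.mul_mem_topologicalClosure_span_s7 {R A : Type*} [CommSemiring R] [Semiring A]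
    [Algebra R A] [TopologicalSpace A] [IsTopologicalSemiring A] [ContinuousConstSMul R A]
    {s : Set A}
    (hs : ∀ a ∈ s, ∀ b ∈ s, a * b ∈ (span R s).topologicalClosure) {x y : A}
    (hx : x ∈ (span R s).topologicalClosure) (hy : y ∈ (span R s).topologicalClosure) :
    x * y ∈ (span R s).topologicalClosure := by
  have hmul : span R s * span R s ≤ (span R s).topologicalClosure := by
    rw [span_mul_span, span_le]
    rintro _ ⟨a, ha, b, hb, rfl⟩
    exact hs a ha b hb
  rw [← SetLike.mem_coe, ← (span R s).isClosed_topologicalClosure.closure_eq]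
  exact map_mem_closure₂ continuous_mul hx hy fun a ha b hb => hmul (mul_mem_mul ha hb)

theorem Submodule.star_mem_topologicalClosure_span_s7 {R A : Type*} [CommSemiring R] [StarRing R]
    [AddCommMonoid A] [StarAddMonoid A] [Module R A] [StarModule R A] [TopologicalSpace A]
    [ContinuousAdd A] [ContinuousConstSMul R A] [ContinuousStar A] {s : Set A}
    (hs : ∀ a ∈ s, star a ∈ span R s) {x : A}
    (hx : x ∈ (span R s).topologicalClosure) : star x ∈ (span R s).topologicalClosure := by
  have hspan : ∀ y ∈ span R s, star y ∈ span R s := by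
    intro y hy
    induction hy using span_induction with
    | mem a ha => exact hs a ha
    | zero => simp
    | add a b _ _ ha hb => simpa using add_mem ha hb
    | smul c a _ ha => simpa using smul_mem _ (star c) ha
  exact map_mem_closure continuous_star hx hspan

theorem IsOpen.mem_closure_compl_singleton {α : Type*} [TopologicalSpace α] [PerfectSpace α]
    {U : Set α} (hU : IsOpen U) (z : U) : z ∈ closure ({z}ᶜ : Set U) := by
  have hacc := hU.preperfect z z.2
  rw [AccPt] at hacc
  rw [closure_subtype, mem_closure_iff_nhdsWithin_neBot]
  convert hacc using 1
  rw [nhdsWithin, nhdsWithin, inf_assoc, Filter.inf_principal]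
  congr 2
  ext x
  simp only [Set.mem_image, Set.mem_compl_iff, Set.mem_singleton_iff, Set.mem_inter_iff]
  constructor
  · rintro ⟨y, hy, rfl⟩
    exact ⟨fun h => hy (Subtype.ext h), y.2⟩
  · rintro ⟨hxz, hxU⟩
    exact ⟨⟨x, hxU⟩, fun h => hxz (congrArg Subtype.val h), rfl⟩

lemma inv_one_sub_mul_mul_inv_one_sub_mul {K : Type*} [Field K] {z w x : K} (hzw : z - w ≠ 0)
    (hz : 1 - z * x ≠ 0) (hw : 1 - w * x ≠ 0) :
    (1 - z * x)⁻¹ * (1 - w * x)⁻¹ = (z - w)⁻¹ * (z * (1 - z * x)⁻¹ - w * (1 - w * x)⁻¹) := by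
  rw [eq_inv_mul_iff_mul_eq₀ hzw]
  linear_combination
    (z * (1 - z * x)⁻¹) * mul_inv_cancel₀ hw - (w * (1 - w * x)⁻¹) * mul_inv_cancel₀ hz

lemma inv_one_sub_mul_inv {K : Type*} [Field K] {a x : K} (ha : a ≠ 0) (hx : x ≠ 0)
    (hax : a - x ≠ 0) :
    (1 - a * x⁻¹)⁻¹ = 1 - (1 - a⁻¹ * x)⁻¹ := by
  have hxa : x - a ≠ 0 := by rwa [← neg_sub, neg_ne_zero]
  rw [show 1 - a * x⁻¹ = (x - a) / x by field_simp, show 1 - a⁻¹ * x = (a - x) / a by field_simp,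
    inv_div, inv_div]
  field_simp
  ring

noncomputable section

local notation "𝕋" => Metric.sphere (0 : ℂ) 1

namespace CircleKernels

def offCircle : Set ℂ := {z | ‖z‖ ≠ 1}

lemma isOpen_offCircle : IsOpen offCircle := isOpen_ne_fun continuous_norm continuous_const

lemma one_sub_mul_ne_zero (z : offCircle) (x : 𝕋) : 1 - z.1 * x.1 ≠ 0 := by
  intro h
  apply z.2
  simpa [norm_eq_of_mem_sphere] using congrArg norm (sub_eq_zero.mp h).symm

def cauchyKernel : C(offCircle, C(𝕋, ℂ)) :=
  ContinuousMap.curry ⟨fun p => (1 - p.1.1 * p.2.1)⁻¹,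
    (by fun_prop : Continuous fun p : offCircle × 𝕋 => 1 - p.1.1 * p.2.1).inv₀
      fun p => one_sub_mul_ne_zero p.1 p.2⟩

lemma cauchyKernel_apply (z : offCircle) (x : 𝕋) : cauchyKernel z x = (1 - z.1 * x.1)⁻¹ := rfl

def kernelSpan : Submodule ℂ C(𝕋, ℂ) := Submodule.span ℂ (Set.range cauchyKernel)

lemma cauchyKernel_mem_kernelSpan (z : offCircle) : cauchyKernel z ∈ kernelSpan :=
  Submodule.subset_span ⟨z, rfl⟩

lemma one_mem_kernelSpan : (1 : C(𝕋, ℂ)) ∈ kernelSpan := by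
  convert cauchyKernel_mem_kernelSpan ⟨0, by simp [offCircle]⟩
  ext x
  simp [cauchyKernel_apply]

lemma cauchyKernel_mul_cauchyKernel {z w : offCircle} (hzw : z ≠ w) :
    cauchyKernel z * cauchyKernel w
      = (z.1 - w.1)⁻¹ • (z.1 • cauchyKernel z - w.1 • cauchyKernel w) := by
  ext x
  exact inv_one_sub_mul_mul_inv_one_sub_mul (sub_ne_zero.mpr (Subtype.coe_ne_coe.mpr hzw))
    (one_sub_mul_ne_zero z x) (one_sub_mul_ne_zero w x)

def reflect (z : offCircle) : offCircle :=
  ⟨(starRingEnd ℂ z.1)⁻¹, by simpa [offCircle] using z.2⟩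

lemma star_cauchyKernel {z : offCircle} (hz : z.1 ≠ 0) :
    star (cauchyKernel z) = 1 - cauchyKernel (reflect z) := by
  ext x
  have hx : starRingEnd ℂ x.1 = x.1⁻¹ := by
    rw [Complex.inv_def, Complex.normSq_eq_norm_sq, norm_eq_of_mem_sphere]; simp
  have hx0 : x.1 ≠ 0 := norm_ne_zero_iff.mp (by simp)
  have hzx : starRingEnd ℂ z.1 - x.1 ≠ 0 :=
    sub_ne_zero.mpr fun h => z.2 (by rw [← Complex.norm_conj, h, norm_eq_of_mem_sphere])
  simp only [ContinuousMap.star_apply, ContinuousMap.sub_apply, ContinuousMap.one_apply,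
    cauchyKernel_apply, reflect, Complex.star_def, map_inv₀, map_sub, map_one, map_mul, hx]
  exact inv_one_sub_mul_inv (by simpa using hz) hx0 hzx

lemma star_cauchyKernel_mem (z : offCircle) : star (cauchyKernel z) ∈ kernelSpan := by
  by_cases hz : z.1 = 0
  · have : cauchyKernel z = 1 := by ext x; simp [cauchyKernel_apply, hz]
    simpa [this] using one_mem_kernelSpan
  · rw [star_cauchyKernel hz]
    exact sub_mem one_mem_kernelSpan (cauchyKernel_mem_kernelSpan _)

lemma cauchyKernel_mul_mem (z w : offCircle) :
    cauchyKernel z * cauchyKernel w ∈ kernelSpan.topologicalClosure := by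
  have hne : ∀ w ≠ z, cauchyKernel z * cauchyKernel w ∈ kernelSpan := fun w hw => by
    rw [cauchyKernel_mul_cauchyKernel hw.symm]
    exact Submodule.smul_mem _ _ (sub_mem (Submodule.smul_mem _ _ (cauchyKernel_mem_kernelSpan z))
      (Submodule.smul_mem _ _ (cauchyKernel_mem_kernelSpan w)))
  obtain hzw | rfl := ne_or_eq z w
  · exact kernelSpan.le_topologicalClosure (hne w hzw.symm)
  have hcont : Continuous fun w => cauchyKernel z * cauchyKernel w := by fun_prop
  refine closure_minimal ?_ kernelSpan.isClosed_topologicalClosure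
    ((hcont.continuousWithinAt (s := {z}ᶜ)).mem_closure_image
      (isOpen_offCircle.mem_closure_compl_singleton z))
  rintro _ ⟨w, hw, rfl⟩
  exact kernelSpan.le_topologicalClosure (hne w hw)

def kernelAlgebra : StarSubalgebra ℂ C(𝕋, ℂ) where
  toSubalgebra := kernelSpan.topologicalClosure.toSubalgebra
    (kernelSpan.le_topologicalClosure one_mem_kernelSpan) fun _ _ =>
      Submodule.mul_mem_topologicalClosure_span_s7
        (by rintro _ ⟨z, rfl⟩ _ ⟨w, rfl⟩; exact cauchyKernel_mul_mem z w)
  star_mem' := Submodule.star_mem_topologicalClosure_span_s7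
    (by rintro _ ⟨z, rfl⟩; exact star_cauchyKernel_mem z)

lemma kernelAlgebra_separatesPoints : kernelAlgebra.SeparatesPoints := by
  intro x y hxy
  let z : offCircle := ⟨1 / 2, by norm_num [offCircle]⟩
  refine ⟨_, ⟨cauchyKernel z,
    kernelSpan.le_topologicalClosure (cauchyKernel_mem_kernelSpan z), rfl⟩, fun h => hxy ?_⟩
  simp only [cauchyKernel_apply, inv_inj, sub_right_inj, z] at h
  exact Subtype.ext (mul_left_cancel₀ (by norm_num) h)

lemma kernelSpan_dense : kernelSpan.topologicalClosure = ⊤ := by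
  rw [eq_top_iff]
  intro f _
  have hdense := ContinuousMap.starSubalgebra_topologicalClosure_eq_top_of_separatesPoints
    kernelAlgebra kernelAlgebra_separatesPoints
  exact StarSubalgebra.topologicalClosure_minimal le_rfl kernelSpan.isClosed_topologicalClosure
    (hdense ▸ StarSubalgebra.mem_top : f ∈ kernelAlgebra.topologicalClosure)

lemma cauchyKernel_apply_eq_one_add (z : offCircle) (x : 𝕋) :
    cauchyKernel z x = 1 + z.1 * x.1 / (1 - z.1 * x.1) := by
  rw [cauchyKernel_apply, one_add_div (one_sub_mul_ne_zero z x), sub_add_cancel, one_div]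

end CircleKernels

end

open CircleKernels in
/-- The complex linear span of the constant function `1` together with the functions
`x ↦ zx/(1 - zx)` for `z ∈ ℂ` with `|z| ≠ 1`, restricted to the unit circle,
is dense in `C(𝕋)` with respect to the uniform norm. -/
theorem circle_kernels_dense (f : C(Metric.sphere (0 : ℂ) 1, ℂ)) (ε : ℝ) (hε : 0 < ε) :
    ∃ (c₀ : ℂ) (n : ℕ) (c : Fin n → ℂ) (z : Fin n → ℂ),
      (∀ i, ‖z i‖ ≠ 1) ∧
      ∀ x : Metric.sphere (0 : ℂ) 1,
        ‖f x - (c₀ + ∑ i, c i * (z i * (x : ℂ) / (1 - z i * (x : ℂ))))‖ < ε := by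
  have hf : f ∈ closure (kernelSpan : Set _) := by
    rw [← Submodule.topologicalClosure_coe, kernelSpan_dense]; trivial
  obtain ⟨g, hg, hfg⟩ := Metric.mem_closure_iff.mp hf ε hε
  obtain ⟨n, c, k, rfl⟩ := Submodule.mem_span_set'.mp hg
  choose z hz using fun i => (k i).2
  refine ⟨∑ i, c i, n, c, fun i => z i, fun i => (z i).2, fun x => ?_⟩
  have hgx : (∑ i, c i • (k i : C(_, ℂ))) x
      = ∑ i, c i + ∑ i, c i * (z i * x.1 / (1 - z i * x.1)) := by
    simp [← hz, cauchyKernel_apply_eq_one_add, mul_add, sum_add_distrib]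
  rw [← hgx]
  calc _ ≤ ‖f - ∑ i, c i • (k i : C(_, ℂ))‖ := ContinuousMap.norm_coe_le_norm _ x
    _ < ε := by rwa [dist_eq_norm] at hfg
end

section
/- Let μ be a Borel probability measure on the unit circle, identified with angles θ ∈ (−π, π], and δ ∈ (0, π/2). Then |1 − m₁(μ)|² ≤ 2δ² + 10·(μ({θ : |θ| > δ}))², where m₁(μ) = ∫ e^{iθ} dμ(θ). -/
open MeasureTheory Complex Real

/-! On `{|arg x| ≤ δ}` the chord `‖1 - x‖` is at most the arc `|arg x| ≤ δ`, and elsewhere it is at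
most `2`; integrating gives `‖1 - m₁‖ ≤ 2t + δ(1 - t)` with `t` the tail mass, and
`(a + b)² ≤ 2a² + 2b²` finishes. -/

lemma Complex.norm_one_sub_le_abs_arg {z : ℂ} (hz : ‖z‖ = 1) : ‖1 - z‖ ≤ |arg z| := by
  have hz_exp : z = exp (I * arg z) := by
    simpa [hz, mul_comm] using (norm_mul_exp_arg_mul_I z).symm
  have := norm_exp_I_mul_ofReal_sub_one_le (x := arg z)
  rwa [← hz_exp, norm_sub_rev, Real.norm_eq_abs] at this

lemma MeasureTheory.norm_integral_le_of_norm_le_of_norm_le_compl {α E : Type*}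
    [MeasurableSpace α] [NormedAddCommGroup E] [NormedSpace ℝ E] {μ : Measure α}
    [IsFiniteMeasure μ] {f : α → E} (hf : Integrable f μ) {s : Set α} (hs : MeasurableSet s)
    {a b : ℝ} (ha : ∀ x ∈ s, ‖f x‖ ≤ a) (hb : ∀ x ∈ sᶜ, ‖f x‖ ≤ b) :
    ‖∫ x, f x ∂μ‖ ≤ a * μ.real s + b * μ.real sᶜ := by
  rw [← integral_add_compl hs hf]
  exact (norm_add_le _ _).trans <| add_le_add
    (norm_setIntegral_le_of_norm_le_const (measure_lt_top μ s) ha)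
    (norm_setIntegral_le_of_norm_le_const (measure_lt_top μ sᶜ) hb)

theorem first_moment_le_of_tail_general (μ : Measure (Metric.sphere (0 : ℂ) 1))
    [IsProbabilityMeasure μ] (δ : ℝ) :
    ‖1 - ∫ x : Metric.sphere (0 : ℂ) 1, (x : ℂ) ∂μ‖ ^ 2 ≤
      2 * δ ^ 2 + 10 * (μ {x : Metric.sphere (0 : ℂ) 1 | δ < |Complex.arg (x : ℂ)|}).toReal ^ 2 := by
  set S : Set (Metric.sphere (0 : ℂ) 1) := {x | δ < |arg (x : ℂ)|}
  have hS : MeasurableSet S := measurableSet_lt measurable_const (by fun_prop)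
  have hX : Integrable (fun x : Metric.sphere (0 : ℂ) 1 ↦ (x : ℂ)) μ :=
    continuous_subtype_val.integrable_of_hasCompactSupport (.of_compactSpace _)
  have h_one_sub : 1 - ∫ x, (x : ℂ) ∂μ = ∫ x, (1 - (x : ℂ)) ∂μ := by
    rw [integral_sub (integrable_const 1) hX, integral_const, probReal_univ, one_smul]
  have h_tail : ∀ x ∈ S, ‖1 - (x : ℂ)‖ ≤ 2 := fun x _ ↦
    (norm_sub_le _ _).trans_eq (by simp [norm_eq_of_mem_sphere x]; norm_num)
  have h_bulk : ∀ x ∈ Sᶜ, ‖1 - (x : ℂ)‖ ≤ δ := fun x hx ↦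
    (norm_one_sub_le_abs_arg (norm_eq_of_mem_sphere x)).trans (not_lt.mp hx)
  have h_norm : ‖1 - ∫ x, (x : ℂ) ∂μ‖ ≤ 2 * μ.real S + δ * (1 - μ.real S) := by
    rw [h_one_sub, ← probReal_compl_eq_one_sub hS]
    exact norm_integral_le_of_norm_le_of_norm_le_compl ((integrable_const 1).sub hX) hS
      h_tail h_bulk
  have h_compl_sq : (1 - μ.real S) ^ 2 ≤ 1 := by
    have : μ.real S ≤ 1 := measureReal_le_one
    nlinarith [measureReal_nonneg (μ := μ) (s := S)]
  change _ ≤ 2 * δ ^ 2 + 10 * μ.real S ^ 2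
  calc ‖1 - ∫ x, (x : ℂ) ∂μ‖ ^ 2 ≤ (2 * μ.real S + δ * (1 - μ.real S)) ^ 2 :=
        pow_le_pow_left₀ (norm_nonneg _) h_norm 2
    _ ≤ 2 * ((2 * μ.real S) ^ 2 + (δ * (1 - μ.real S)) ^ 2) := add_sq_le
    _ ≤ 2 * δ ^ 2 + 10 * μ.real S ^ 2 := by
        nlinarith [mul_le_mul_of_nonneg_left h_compl_sq (sq_nonneg δ)]

/-- For a probability measure `μ` on the unit circle (points identified with their
angles `θ = arg ξ ∈ (-π, π]`) and `δ ∈ (0, π/2)`: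
`|1 - m₁(μ)|² ≤ 2δ² + 10·(μ({θ : |θ| > δ}))²`, where `m₁(μ)` is the first moment. -/
theorem first_moment_le_of_tail (μ : Measure (Metric.sphere (0 : ℂ) 1))
    [IsProbabilityMeasure μ] (δ : ℝ) (hδ : δ ∈ Set.Ioo 0 (π / 2)) :
    ‖1 - ∫ x : Metric.sphere (0 : ℂ) 1, (x : ℂ) ∂μ‖ ^ 2 ≤
      2 * δ ^ 2 + 10 * (μ {x : Metric.sphere (0 : ℂ) 1 | δ < |Complex.arg (x : ℂ)|}).toReal ^ 2 :=
  first_moment_le_of_tail_general μ δ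
end

section
/- Suppose μ is a Borel probability measure on ℝ of the form μ = KM(ν) for a probability measure ν on ℝ with ∫ log(1+|x|) dν(x) < ∞, i.e., the Cauchy transform of μ satisfies G_μ(z) = exp(−∫ log(z−x) dν(z)) for all z ∈ ℂ⁺ (principal branch of log). If ν is not a Dirac delta measure, then μ has no atoms: μ({a}) = 0 for every a ∈ ℝ. -/
open MeasureTheory Complex Filter Set Topology

/-! The mass of `μ` at `a` is the limit of `i y G_μ(a + i y)` as `y ↓ 0`, by dominated
convergence since `|y| ≤ |a + i y - x|`. The representation of `G_μ` gives
`|i y G_μ(a + i y)| = exp ∫ log (y / |a + i y - x|) dν(x)`. The integrand is `≤ 0` everywhere and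
`≤ log (y / δ)` where `|x - a| ≥ δ`; as `ν` is not a point mass at `a`, this set has mass `c > 0`
for some `δ > 0`, so `|i y G_μ(a + i y)| ≤ (y / δ) ^ c → 0`. -/

lemma MeasureTheory.Measure.eq_dirac_of_measure_compl_singleton_eq_zero {ν : Measure ℝ}
    [IsProbabilityMeasure ν] {a : ℝ} (h : ν {a}ᶜ = 0) : ν = Measure.dirac a := by
  have hae : ∀ᵐ x ∂ν, x ∈ ({a} : Set ℝ) := ae_iff.2 h
  rw [← Measure.restrict_eq_self_of_ae_mem hae, Measure.restrict_singleton,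
    (prob_compl_eq_zero_iff (measurableSet_singleton a)).1 h, one_smul]

lemma exists_measure_setOf_le_abs_sub_ne_zero {ν : Measure ℝ} {a : ℝ} (h : ν {a}ᶜ ≠ 0) :
    ∃ δ > 0, ν {x | δ ≤ |x - a|} ≠ 0 := by
  by_contra! hnull
  refine h (measure_mono_null (fun x (hx : x ≠ a) => ?_)
    (measure_iUnion_null fun n : ℕ => hnull (1 / (n + 1)) Nat.one_div_pos_of_nat))
  obtain ⟨n, hn⟩ := exists_nat_one_div_lt (abs_pos.2 (sub_ne_zero.2 hx))
  exact mem_iUnion.2 ⟨n, hn.le⟩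

lemma Complex.abs_log_norm_sub_ofReal_le {z : ℂ} (hz : 0 < z.im) (x : ℝ) :
    |Real.log ‖z - x‖| ≤ Real.log (1 + |x|) + (Real.log (1 + ‖z‖) + |Real.log z.im|) := by
  have him : z.im ≤ ‖z - x‖ := by simpa using im_le_norm (z - x)
  have hupper : ‖z - x‖ ≤ (1 + |x|) * (1 + ‖z‖) := by
    have := norm_sub_le z (x : ℂ)
    rw [norm_real, Real.norm_eq_abs] at this
    nlinarith [abs_nonneg x, norm_nonneg z]
  have hx : 0 ≤ Real.log (1 + |x|) := Real.log_nonneg (by linarith [abs_nonneg x])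
  have hz' : 0 ≤ Real.log (1 + ‖z‖) := Real.log_nonneg (by linarith [norm_nonneg z])
  have hlow := Real.log_le_log hz him
  have hup : Real.log ‖z - x‖ ≤ Real.log (1 + |x|) + Real.log (1 + ‖z‖) := by
    rw [← Real.log_mul (by positivity) (by positivity)]
    exact Real.log_le_log (hz.trans_le him) hupper
  rw [abs_le]
  constructor <;> linarith [neg_abs_le (Real.log z.im), abs_nonneg (Real.log z.im)]

lemma MeasureTheory.Integrable.clog_sub_ofReal {ν : Measure ℝ} [IsFiniteMeasure ν]
    (hlog : Integrable (fun x : ℝ => Real.log (1 + |x|)) ν) {z : ℂ} (hz : 0 < z.im) :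
    Integrable (fun x : ℝ => log (z - x)) ν := by
  have hslit : ∀ x : ℝ, z - x ∈ slitPlane := fun x => Or.inr (by simpa using hz.ne')
  refine (hlog.add (integrable_const (Real.log (1 + ‖z‖) + |Real.log z.im| + Real.pi))).mono'
    ((Continuous.clog (by fun_prop) hslit).aestronglyMeasurable) (.of_forall fun x => ?_)
  calc ‖log (z - x)‖ ≤ |(log (z - x)).re| + |(log (z - x)).im| := norm_le_abs_re_add_abs_im _
    _ = |Real.log ‖z - x‖| + |arg (z - x)| := by rw [log_re, log_im]
    _ ≤ _ := add_le_add (abs_log_norm_sub_ofReal_le hz x) (abs_arg_le_pi _)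
    _ = _ := by simp only [Pi.add_apply]; ring

noncomputable def cauchyTransform (μ : Measure ℝ) (z : ℂ) : ℂ := ∫ x : ℝ, (z - x)⁻¹ ∂μ

lemma tendsto_mul_I_cauchyTransform_nhdsGT_zero (μ : Measure ℝ) [IsFiniteMeasure μ] (a : ℝ) :
    Tendsto (fun y : ℝ => (y * I) * cauchyTransform μ (a + y * I)) (𝓝[>] 0)
      (𝓝 (μ.real {a})) := by
  have hlim : ∀ x : ℝ, Tendsto (fun y : ℝ => (y * I) * ((a + y * I) - x)⁻¹) (𝓝[>] 0)
      (𝓝 (({a} : Set ℝ).indicator (fun _ => (1 : ℂ)) x)) := by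
    intro x
    rcases eq_or_ne x a with rfl | hx
    · rw [indicator_of_mem (mem_singleton x)]
      refine tendsto_const_nhds.congr' ?_
      filter_upwards [self_mem_nhdsWithin] with y (hy : 0 < y)
      rw [add_sub_cancel_left, mul_inv_cancel₀ (by simp [hy.ne'])]
    · rw [indicator_of_notMem (by simpa using hx)]
      have hax : (a : ℂ) - x ≠ 0 := sub_ne_zero.2 (by exact_mod_cast hx.symm)
      have hcont : ContinuousAt (fun y : ℝ => (y * I) * ((a + y * I) - x)⁻¹) 0 :=
        (by fun_prop : Continuous fun y : ℝ => (y : ℂ) * I).continuousAt.mul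
          ((by fun_prop : Continuous fun y : ℝ => (a + y * I : ℂ) - x).continuousAt.inv₀
            (by simpa using hax))
      simpa using hcont.tendsto.mono_left nhdsWithin_le_nhds
  have hdom := tendsto_integral_filter_of_dominated_convergence (μ := μ)
    (F := fun (y : ℝ) (x : ℝ) => (y * I) * ((a + y * I : ℂ) - x)⁻¹) (fun _ => 1)
    (.of_forall fun y => (by fun_prop : Measurable fun x : ℝ =>
      (y * I) * ((a + y * I : ℂ) - x)⁻¹).aestronglyMeasurable)
    (.of_forall fun y => .of_forall fun x => ?_) (integrable_const 1) (.of_forall hlim)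
  · simp only [integral_const_mul, integral_indicator_const _ (measurableSet_singleton a),
      real_smul, mul_one] at hdom
    exact hdom
  · calc ‖(y * I) * ((a + y * I) - x)⁻¹‖ = |((a + y * I : ℂ) - x).im / ‖(a + y * I : ℂ) - x‖| := by
          simp [div_eq_mul_inv]
      _ ≤ 1 := abs_im_div_norm_le_one _

lemma log_add_indicator_le_log_norm_sub (a x : ℝ) {y δ : ℝ} (hy : 0 < y) (hδ : 0 < δ) :
    Real.log y + {x | δ ≤ |x - a|}.indicator (fun _ => Real.log δ - Real.log y) x
      ≤ Real.log ‖(a + y * I : ℂ) - x‖ := by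
  have hy_le : y ≤ ‖(a + y * I : ℂ) - x‖ := by simpa using im_le_norm ((a + y * I : ℂ) - x)
  by_cases hx : x ∈ {x : ℝ | δ ≤ |x - a|}
  · have hδ_le : δ ≤ ‖(a + y * I : ℂ) - x‖ := by
      refine hx.out.trans ?_
      simpa [abs_sub_comm] using abs_re_le_norm ((a + y * I : ℂ) - x)
    rw [indicator_of_mem hx]
    linarith [Real.log_le_log hδ hδ_le]
  · rw [indicator_of_notMem hx, add_zero]
    exact Real.log_le_log hy hy_le

lemma norm_mul_exp_neg_integral_clog_le {ν : Measure ℝ} [IsProbabilityMeasure ν]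
    (hlog : Integrable (fun x : ℝ => Real.log (1 + |x|)) ν) (a : ℝ) {y δ : ℝ} (hy : 0 < y)
    (hδ : 0 < δ) :
    ‖(y * I) * exp (-∫ x : ℝ, log ((a + y * I : ℂ) - x) ∂ν)‖
      ≤ (y / δ) ^ ν.real {x | δ ≤ |x - a|} := by
  set s := {x : ℝ | δ ≤ |x - a|}
  set c := ν.real s
  have hs : MeasurableSet s := measurableSet_le measurable_const (by fun_prop)
  have hint := Integrable.clog_sub_ofReal hlog (z := a + y * I) (by simpa using hy)
  have hlower : Real.log y + c * (Real.log δ - Real.log y)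
      ≤ ∫ x : ℝ, (log ((a + y * I : ℂ) - x)).re ∂ν := by
    calc Real.log y + c * (Real.log δ - Real.log y)
        = ∫ x, (Real.log y + s.indicator (fun _ => Real.log δ - Real.log y) x) ∂ν := by
          rw [integral_add (integrable_const _) ((integrable_const _).indicator hs),
            integral_const, integral_indicator_const _ hs]
          simp [c, smul_eq_mul]
      _ ≤ _ := integral_mono ((integrable_const _).add ((integrable_const _).indicator hs))
          hint.re fun x => (log_add_indicator_le_log_norm_sub a x hy hδ).trans_eq (log_re _).symm
  calc ‖(y * I) * exp (-∫ x : ℝ, log ((a + y * I : ℂ) - x) ∂ν)‖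
      = y * Real.exp (-∫ x : ℝ, (log ((a + y * I : ℂ) - x)).re ∂ν) := by
        have hre : (∫ x : ℝ, log ((a + y * I : ℂ) - x) ∂ν).re
            = ∫ x : ℝ, (log ((a + y * I : ℂ) - x)).re ∂ν := (integral_re hint).symm
        rw [norm_mul, norm_exp, neg_re, hre]
        simp [hy.le]
    _ ≤ y * Real.exp (-(Real.log y + c * (Real.log δ - Real.log y))) := by gcongr
    _ = (y / δ) ^ c := by
        rw [Real.rpow_def_of_pos (div_pos hy hδ), Real.log_div hy.ne' hδ.ne']
        nth_rewrite 1 [← Real.exp_log hy]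
        rw [← Real.exp_add]
        ring_nf

/-- If `μ` is the Markov transform of a probability measure `ν` on `ℝ` with
`∫ log(1+|x|) dν < ∞`, i.e. the Cauchy transform of `μ` satisfies
`G_μ(z) = exp(-∫ log(z-x) dν(x))` on the upper half-plane, and `ν` is not a
Dirac measure, then `μ` has no atoms. -/
theorem markov_transform_no_atoms (μ ν : Measure ℝ)
    [IsProbabilityMeasure μ] [IsProbabilityMeasure ν]
    (hlog : Integrable (fun x : ℝ => Real.log (1 + |x|)) ν)
    (hKM : ∀ z : ℂ, 0 < z.im →
      (∫ x : ℝ, (z - (x : ℂ))⁻¹ ∂μ) = Complex.exp (-∫ x : ℝ, Complex.log (z - (x : ℂ)) ∂ν))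
    (hν : ∀ b : ℝ, ν ≠ Measure.dirac b) :
    ∀ a : ℝ, μ {a} = 0 := by
  intro a
  obtain ⟨δ, hδ, hs⟩ := exists_measure_setOf_le_abs_sub_ne_zero fun h =>
    hν a (Measure.eq_dirac_of_measure_compl_singleton_eq_zero h)
  have hc : 0 < ν.real {x | δ ≤ |x - a|} := ENNReal.toReal_pos hs (measure_ne_top _ _)
  have hbound : ∀ᶠ y : ℝ in 𝓝[>] 0,
      ‖((y : ℂ) * I) * cauchyTransform μ (a + y * I)‖ ≤ (y / δ) ^ ν.real {x | δ ≤ |x - a|} := by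
    filter_upwards [self_mem_nhdsWithin] with y (hy : 0 < y)
    rw [cauchyTransform, hKM _ (by simpa using hy)]
    exact norm_mul_exp_neg_integral_clog_le hlog a hy hδ
  have hzero : Tendsto (fun y : ℝ => (y / δ) ^ ν.real {x | δ ≤ |x - a|}) (𝓝[>] 0) (𝓝 0) :=
    (((continuous_id.div_const δ).rpow_const fun _ => Or.inr hc.le).tendsto' 0 0
      (by simp [hc.ne'])).mono_left nhdsWithin_le_nhds
  have hatom := le_of_tendsto_of_tendsto (tendsto_mul_I_cauchyTransform_nhdsGT_zero μ a).norm
    hzero hbound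
  simpa [measureReal_eq_zero_iff] using hatom
end

section
/- Let f : 𝔻 → ℂ be holomorphic on the unit disk with f(0) = 0, and suppose there exist a ∈ ℂ with Re(a) > 0 and holomorphic p : 𝔻 → ℂ with p(0) = a and Re p(z) > 0 on 𝔻, such that f generates a semigroup (a flow): there exist holomorphic self-maps η_t : 𝔻 → 𝔻 (t ≥ 0) with η₀ = id, η_s ∘ η_t = η_{s+t}, η₁ = f, and ∂_t η_t(z) = −η_t(z)·p(η_t(z)). Then f is injective on 𝔻. -/
/-!
If `f z₁ = f z₂`, the trajectories `t ↦ η t z₁` and `t ↦ η t z₂` of the vector field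
`w ↦ -w p(w)` agree at time `1`. This field is holomorphic, hence locally Lipschitz on the disk,
and the two trajectories over `[0, 1]` stay in a compact subset of the disk, on which the field is
Lipschitz. Uniqueness for the ODE run backwards in time then forces the trajectories to agree at
time `0`, that is, `z₁ = z₂`.
-/

open Metric Set

theorem DifferentiableOn.locallyLipschitzOn {E : Type*} [NormedAddCommGroup E]
    [NormedSpace ℂ E] [CompleteSpace E] {f : ℂ → E} {U : Set ℂ}
    (hf : DifferentiableOn ℂ f U) (hU : IsOpen U) :
    LocallyLipschitzOn U f := by
  intro z hz
  obtain ⟨K, t, ht, hK⟩ :=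
    (hf.analyticAt (hU.mem_nhds hz)).contDiffAt.exists_lipschitzOnWith
  exact ⟨K, t, nhdsWithin_le_nhds ht, hK⟩

theorem ODE_solution_unique_of_mem_Icc_left_of_locallyLipschitzOn {E : Type*}
    [NormedAddCommGroup E] [NormedSpace ℝ E] {v : E → E} {U : Set E} {f g : ℝ → E} {a b : ℝ}
    (hv : LocallyLipschitzOn U v)
    (hf : ContinuousOn f (Icc a b))
    (hf' : ∀ t ∈ Ioc a b, HasDerivWithinAt f (v (f t)) (Iic t) t)
    (hfU : MapsTo f (Icc a b) U)
    (hg : ContinuousOn g (Icc a b))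
    (hg' : ∀ t ∈ Ioc a b, HasDerivWithinAt g (v (g t)) (Iic t) t)
    (hgU : MapsTo g (Icc a b) U)
    (hb : f b = g b) :
    EqOn f g (Icc a b) := by
  set K := f '' Icc a b ∪ g '' Icc a b
  have hK : IsCompact K :=
    (isCompact_Icc.image_of_continuousOn hf).union (isCompact_Icc.image_of_continuousOn hg)
  obtain ⟨L, hL⟩ := (hv.mono (union_subset hfU.image_subset hgU.image_subset))
    |>.exists_lipschitzOnWith_of_compact hK
  exact ODE_solution_unique_of_mem_Icc_left (v := fun _ => v) (s := fun _ => K) (fun _ _ => hL)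
    hf hf' (fun t ht => .inl (mem_image_of_mem f (Ioc_subset_Icc_self ht)))
    hg hg' (fun t ht => .inr (mem_image_of_mem g (Ioc_subset_Icc_self ht))) hb

theorem semigroup_element_injective_general (f : ℂ → ℂ)
    (p : ℂ → ℂ) (hp : DifferentiableOn ℂ p (Metric.ball (0 : ℂ) 1))
    (η : ℝ → ℂ → ℂ)
    (hmaps : ∀ t : ℝ, 0 ≤ t →
      Set.MapsTo (η t) (Metric.ball (0 : ℂ) 1) (Metric.ball (0 : ℂ) 1))
    (hid : ∀ z ∈ Metric.ball (0 : ℂ) 1, η 0 z = z)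
    (hη1 : ∀ z ∈ Metric.ball (0 : ℂ) 1, η 1 z = f z)
    (hode : ∀ z ∈ Metric.ball (0 : ℂ) 1, ∀ t : ℝ, 0 ≤ t →
      HasDerivWithinAt (fun s : ℝ => η s z) (-(η t z) * p (η t z)) (Set.Ici 0) t) :
    Set.InjOn f (Metric.ball (0 : ℂ) 1) := by
  intro z₁ hz₁ z₂ hz₂ hfz
  have hv : LocallyLipschitzOn (ball (0 : ℂ) 1) fun w => -w * p w :=
    (differentiableOn_id.neg.mul hp).locallyLipschitzOn isOpen_ball
  have hcont : ∀ z ∈ ball (0 : ℂ) 1, ContinuousOn (fun t => η t z) (Icc 0 1) :=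
    fun z hz t ht => (hode z hz t ht.1).continuousWithinAt.mono Icc_subset_Ici_self
  have hderiv : ∀ z ∈ ball (0 : ℂ) 1, ∀ t ∈ Ioc (0 : ℝ) 1,
      HasDerivWithinAt (fun s => η s z) (-(η t z) * p (η t z)) (Iic t) t :=
    fun z hz t ht => ((hode z hz t ht.1.le).hasDerivAt (Ici_mem_nhds ht.1)).hasDerivWithinAt
  have hball : ∀ z ∈ ball (0 : ℂ) 1, MapsTo (fun t => η t z) (Icc 0 1) (ball 0 1) :=
    fun z hz t ht => hmaps t ht.1 hz
  have hagree := ODE_solution_unique_of_mem_Icc_left_of_locallyLipschitzOn hv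
    (hcont z₁ hz₁) (hderiv z₁ hz₁) (hball z₁ hz₁)
    (hcont z₂ hz₂) (hderiv z₂ hz₂) (hball z₂ hz₂)
    (by simp only [hη1 z₁ hz₁, hη1 z₂ hz₂, hfz])
  simpa only [hid z₁ hz₁, hid z₂ hz₂] using hagree (left_mem_Icc.2 zero_le_one)

/-- If a holomorphic function `f` on the unit disk with `f 0 = 0` embeds at time `1`
into a semigroup `(η_t)_{t ≥ 0}` of holomorphic self-maps of the disk solving the
ODE `∂_t η_t(z) = -η_t(z)·p(η_t(z))` with Berkson–Porta data `p` satisfying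
`p 0 = a`, `Re a > 0`, `Re p > 0` on the disk, then `f` is injective on the disk. -/
theorem semigroup_element_injective (f : ℂ → ℂ)
    (hf : DifferentiableOn ℂ f (Metric.ball (0 : ℂ) 1)) (hf0 : f 0 = 0)
    (a : ℂ) (ha : 0 < a.re)
    (p : ℂ → ℂ) (hp : DifferentiableOn ℂ p (Metric.ball (0 : ℂ) 1))
    (hpa : p 0 = a) (hpre : ∀ z ∈ Metric.ball (0 : ℂ) 1, 0 < (p z).re)
    (η : ℝ → ℂ → ℂ)
    (hmaps : ∀ t : ℝ, 0 ≤ t →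
      Set.MapsTo (η t) (Metric.ball (0 : ℂ) 1) (Metric.ball (0 : ℂ) 1))
    (hhol : ∀ t : ℝ, 0 ≤ t → DifferentiableOn ℂ (η t) (Metric.ball (0 : ℂ) 1))
    (hid : ∀ z ∈ Metric.ball (0 : ℂ) 1, η 0 z = z)
    (hsg : ∀ s : ℝ, 0 ≤ s → ∀ t : ℝ, 0 ≤ t → ∀ z ∈ Metric.ball (0 : ℂ) 1,
      η s (η t z) = η (s + t) z)
    (hη1 : ∀ z ∈ Metric.ball (0 : ℂ) 1, η 1 z = f z)
    (hode : ∀ z ∈ Metric.ball (0 : ℂ) 1, ∀ t : ℝ, 0 ≤ t →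
      HasDerivWithinAt (fun s : ℝ => η s z) (-(η t z) * p (η t z)) (Set.Ici 0) t) :
    Set.InjOn f (Metric.ball (0 : ℂ) 1) :=
  semigroup_element_injective_general f p hp η hmaps hid hη1 hode
end

section
/- Let μ be a Borel probability measure on the unit circle 𝕋 with nonzero first moment, and suppose that for every c ∈ (0,1) there exists a probability measure ν_c on 𝕋 with (1−c)·Haar + c·μ = μ ↻ ν_c, where ↻ is multiplicative monotone convolution (η_{α ↻ β} = η_α ∘ η_β) and Haar is the normalized arc-length measure. Then c·ψ_μ(𝔻) ⊆ ψ_μ(𝔻) for all c ∈ (0,1), where ψ_μ(z) = ∫ (xz)/(1−xz) dμ(x) is the moment generating function on the unit disk 𝔻. -/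
open MeasureTheory Complex Metric Set

/-- The moment generating function `ψ_μ(z) = ∫ xz/(1-xz) dμ(x)` of a measure on
the unit circle, defined on the open unit disk. -/
noncomputable def psiT (μ : MeasureTheory.Measure (Metric.sphere (0 : ℂ) 1)) (z : ℂ) : ℂ :=
  ∫ x : Metric.sphere (0 : ℂ) 1, (x : ℂ) * z / (1 - (x : ℂ) * z) ∂μ

/-- The `η`-transform `η_μ = ψ_μ/(1 + ψ_μ)` of a measure on the unit circle. -/
noncomputable def etaT (μ : MeasureTheory.Measure (Metric.sphere (0 : ℂ) 1)) (z : ℂ) : ℂ :=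
  psiT μ z / (1 + psiT μ z)

/-! For `‖u‖ < 1` one has `Re (u / (1 - u)) ≥ -‖u‖ / (1 + ‖u‖) > -1/2`, and since `‖x z‖ = ‖z‖`
for `x` on the circle, this bound integrates to `Re ψ_ν(z) > -1/2` for every probability measure `ν`.
Hence `η_ν = ψ_ν / (1 + ψ_ν)` maps the disk into itself, and neither `1 + c ψ_μ(z)` nor
`1 + ψ_μ(w)` vanishes. Since `p ↦ p / (1 + p)` is injective away from `-1`, the identity
`c ψ_μ(z) / (1 + c ψ_μ(z)) = η_μ(η_ν(z))` gives `c ψ_μ(z) = ψ_μ(w)` with `w = η_ν(z)`. -/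

lemma one_sub_ne_zero_of_norm_lt_one {u : ℂ} (hu : ‖u‖ < 1) : 1 - u ≠ 0 := by
  rw [sub_ne_zero]
  rintro rfl
  simp at hu

lemma neg_div_one_add_norm_le_re_div_one_sub {u : ℂ} (hu : ‖u‖ < 1) :
    -(‖u‖ / (1 + ‖u‖)) ≤ (u / (1 - u)).re := by
  have hn : 0 < normSq (1 - u) := normSq_pos.2 (one_sub_ne_zero_of_norm_lt_one hu)
  have hsq : ‖u‖ ^ 2 = u.re ^ 2 + u.im ^ 2 := by rw [Complex.sq_norm, normSq_apply]; ring
  have hre : -‖u‖ ≤ u.re := neg_le_of_abs_le (abs_re_le_norm u)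
  rw [div_re, ← add_div, le_div_iff₀ hn, neg_mul, div_mul_eq_mul_div, neg_le,
    le_div_iff₀ (by positivity)]
  simp only [normSq_apply, sub_re, sub_im, one_re, one_im]
  -- `(1 - Re u)(1 + |u|) - |1 - u|² = (|u| + Re u)(1 - |u|)`
  nlinarith [mul_nonneg (neg_le_iff_add_nonneg.1 hre) (sub_nonneg.2 hu.le)]

lemma norm_coe_sphere_mul (x : sphere (0 : ℂ) 1) (z : ℂ) : ‖(x : ℂ) * z‖ = ‖z‖ := by
  rw [norm_mul, norm_eq_of_mem_sphere, one_mul]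

lemma neg_half_lt_re_psiT (μ : Measure (sphere (0 : ℂ) 1)) [IsProbabilityMeasure μ]
    {z : ℂ} (hz : z ∈ ball (0 : ℂ) 1) : -1 / 2 < (psiT μ z).re := by
  rw [mem_ball_zero_iff] at hz
  have hbound (x : sphere (0 : ℂ) 1) :
      -(‖z‖ / (1 + ‖z‖)) ≤ ((x : ℂ) * z / (1 - (x : ℂ) * z)).re := by
    simpa only [norm_coe_sphere_mul] using
      neg_div_one_add_norm_le_re_div_one_sub ((norm_coe_sphere_mul x z).trans_lt hz)
  have hint : Integrable (fun x : sphere (0 : ℂ) 1 => (x : ℂ) * z / (1 - (x : ℂ) * z)) μ := by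
    refine Continuous.integrable_of_hasCompactSupport ?_ (HasCompactSupport.of_compactSpace _)
    exact (continuous_subtype_val.mul continuous_const).div
      (continuous_const.sub (continuous_subtype_val.mul continuous_const))
      fun x => one_sub_ne_zero_of_norm_lt_one ((norm_coe_sphere_mul x z).trans_lt hz)
  have hlt : -1 / 2 < -(‖z‖ / (1 + ‖z‖)) := by
    have : ‖z‖ / (1 + ‖z‖) < 1 / 2 := by rw [div_lt_iff₀ (by positivity)]; linarith
    linarith
  calc -1 / 2 < -(‖z‖ / (1 + ‖z‖)) := hlt
    _ = ∫ _ : sphere (0 : ℂ) 1, -(‖z‖ / (1 + ‖z‖)) ∂μ := by simp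
    _ ≤ ∫ x, ((x : ℂ) * z / (1 - (x : ℂ) * z)).re ∂μ :=
      integral_mono (integrable_const _) hint.re hbound
    _ = (psiT μ z).re := integral_re hint

lemma norm_div_one_add_lt_one {p : ℂ} (hp : -1 / 2 < p.re) : ‖p / (1 + p)‖ < 1 := by
  have h : ‖p‖ < ‖1 + p‖ := by
    rw [← sq_lt_sq₀ (norm_nonneg _) (norm_nonneg _), Complex.sq_norm, Complex.sq_norm]
    simp only [normSq_apply, add_re, add_im, one_re, one_im]
    nlinarith
  rw [norm_div, div_lt_one ((norm_nonneg p).trans_lt h)]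
  exact h

lemma etaT_mem_ball (ν : Measure (sphere (0 : ℂ) 1)) [IsProbabilityMeasure ν]
    {z : ℂ} (hz : z ∈ ball (0 : ℂ) 1) : etaT ν z ∈ ball (0 : ℂ) 1 :=
  mem_ball_zero_iff.2 (norm_div_one_add_lt_one (neg_half_lt_re_psiT ν hz))

lemma one_add_ne_zero_of_neg_one_lt_re {p : ℂ} (hp : -1 < p.re) : 1 + p ≠ 0 := by
  intro h
  have := congrArg re h
  simp only [add_re, one_re, zero_re] at this
  linarith

lemma eq_of_div_one_add_eq_div_one_add {K : Type*} [Field K] {a b : K} (ha : 1 + a ≠ 0)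
    (hb : 1 + b ≠ 0) (h : a / (1 + a) = b / (1 + b)) : a = b := by
  field_simp at h
  linear_combination h

theorem typeH_implies_starlike_general (μ : Measure (Metric.sphere (0 : ℂ) 1))
    [IsProbabilityMeasure μ]
    (hH : ∀ c : ℝ, c ∈ Set.Ioo (0 : ℝ) 1 →
      ∃ ν : Measure (Metric.sphere (0 : ℂ) 1), IsProbabilityMeasure ν ∧
        ∀ z ∈ Metric.ball (0 : ℂ) 1,
          (c : ℂ) * psiT μ z / (1 + (c : ℂ) * psiT μ z) = etaT μ (etaT ν z)) :
    ∀ c : ℝ, c ∈ Set.Ioo (0 : ℝ) 1 → ∀ z ∈ Metric.ball (0 : ℂ) 1,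
      ∃ w ∈ Metric.ball (0 : ℂ) 1, (c : ℂ) * psiT μ z = psiT μ w := by
  intro c hc z hz
  obtain ⟨ν, hν, hcomp⟩ := hH c hc
  have hw : etaT ν z ∈ ball (0 : ℂ) 1 := etaT_mem_ball ν hz
  refine ⟨etaT ν z, hw, eq_of_div_one_add_eq_div_one_add ?_ ?_ (hcomp z hz)⟩
  · apply one_add_ne_zero_of_neg_one_lt_re
    rw [re_ofReal_mul]
    nlinarith [neg_half_lt_re_psiT μ hz, hc.1, hc.2]
  · exact one_add_ne_zero_of_neg_one_lt_re (by linarith [neg_half_lt_re_psiT μ hw])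

/-- If `μ` is a probability measure on the unit circle with nonzero first moment
such that for every `c ∈ (0,1)` there is a probability measure `ν_c` with
`(1-c)·Haar + c·μ = μ ↻ ν_c` — a measure identity that, on the level of
transforms, reads `η_{(1-c)·Haar + c·μ} = η_μ ∘ η_{ν_c}`, i.e.
`cψ_μ(z)/(1 + cψ_μ(z)) = η_μ(η_{ν_c}(z))` on the unit disk (since
`ψ_{(1-c)·Haar + c·μ} = c·ψ_μ`) — then `c·ψ_μ(𝔻) ⊆ ψ_μ(𝔻)` for all `c ∈ (0,1)`. -/
theorem typeH_implies_starlike (μ : Measure (Metric.sphere (0 : ℂ) 1))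
    [IsProbabilityMeasure μ]
    (hm : (∫ x : Metric.sphere (0 : ℂ) 1, (x : ℂ) ∂μ) ≠ 0)
    (hH : ∀ c : ℝ, c ∈ Set.Ioo (0 : ℝ) 1 →
      ∃ ν : Measure (Metric.sphere (0 : ℂ) 1), IsProbabilityMeasure ν ∧
        ∀ z ∈ Metric.ball (0 : ℂ) 1,
          (c : ℂ) * psiT μ z / (1 + (c : ℂ) * psiT μ z) = etaT μ (etaT ν z)) :
    ∀ c : ℝ, c ∈ Set.Ioo (0 : ℝ) 1 → ∀ z ∈ Metric.ball (0 : ℂ) 1,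
      ∃ w ∈ Metric.ball (0 : ℂ) 1, (c : ℂ) * psiT μ z = psiT μ w :=
  typeH_implies_starlike_general μ hH
end
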